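/- arXiv:0705.3790 — 9 statements merged into one kernel-verified Lean document; each statement's English description precedes it below -/
import Mathlib

section
/- Let I be a nonempty countable index set, let p : I → ℝ satisfy p_n > 0 for all n, let p be summable with ∑_n p_n = 1, and let s : I → ℝ be such that (2^(−s_n))_{n∈I} is summable with ∑_n 2^(−s_n) ≤ 1. Define the entropy S : I → ℝ by S_n = −log p_n / log 2 (so that p_n = 2^(−S_n)). If (p_n s_n)_{n∈I} and (p_n S_n)_{n∈I} are summable, then ∑_n p_n S_n ≤ ∑_n p_n s_n, and equality holds if and only if s_n = S_n for all n ∈ I. -/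
/-!
Writing `q n = 2 ^ (-s n)`, one has `(p n * s n - p n * S n) * log 2 = p n * log (p n / q n)`,
so the claim is Gibbs' inequality `∑ p log (p / q) ≥ 0` for `∑ q ≤ 1 = ∑ p`, with equality only
when `q = p`. Termwise, `p log (p / q) = (p - q) + q · klFun (p / q)` with `klFun x = x log x + 1 - x`
nonnegative and vanishing only at `x = 1`; summing, the first parts contribute `∑ p - ∑ q ≥ 0`.
-/

open Real InformationTheory

lemma mul_log_div_eq_sub_add_mul_klFun {p q : ℝ} (hq : q ≠ 0) :
    p * log (p / q) = p - q + q * klFun (p / q) := by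
  rw [klFun_apply]
  field_simp
  ring

theorem gibbs_inequality_tsum {I : Type*} {p q : I → ℝ} (hp : ∀ n, 0 ≤ p n) (hq : ∀ n, 0 < q n)
    (hpsum : Summable p) (hqsum : Summable q) (hqp : ∑' n, q n ≤ ∑' n, p n)
    (hsum : Summable fun n => p n * log (p n / q n)) :
    0 ≤ ∑' n, p n * log (p n / q n) ∧
      (∑' n, p n * log (p n / q n) = 0 ↔ ∀ n, p n = q n) := by
  set g : I → ℝ := fun n => q n * klFun (p n / q n)
  have hg_nonneg : ∀ n, 0 ≤ g n := fun n =>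
    mul_nonneg (hq n).le (klFun_nonneg (div_nonneg (hp n) (hq n).le))
  have hsplit : ∀ n, p n * log (p n / q n) = p n - q n + g n := fun n =>
    mul_log_div_eq_sub_add_mul_klFun (hq n).ne'
  have hgsum : Summable g := by
    refine ((hsum.sub hpsum).add hqsum).congr fun n => ?_
    rw [hsplit]
    ring
  have htsum : ∑' n, p n * log (p n / q n) = (∑' n, p n - ∑' n, q n) + ∑' n, g n := by
    rw [tsum_congr hsplit, (hpsum.sub hqsum).tsum_add hgsum, hpsum.tsum_sub hqsum]
  have hg_tsum_nonneg : 0 ≤ ∑' n, g n := tsum_nonneg hg_nonneg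
  refine ⟨by linarith, fun hzero n => ?_, fun hpq => by simp [hpq, (hq _).ne']⟩
  have hg_zero : ∀ n, g n = 0 := by
    have hg_tsum_zero : ∑' n, g n = 0 := by linarith
    exact funext_iff.mp ((hasSum_zero_iff_of_nonneg hg_nonneg).mp (hg_tsum_zero ▸ hgsum.hasSum))
  have hratio : p n / q n = 1 :=
    (klFun_eq_zero_iff (div_nonneg (hp n) (hq n).le)).mp
      ((mul_eq_zero.mp (hg_zero n)).resolve_left (hq n).ne')
  exact (div_eq_one_iff_eq (hq n).ne').mp hratio

theorem entropy_is_unique_optimal_decision_strategy_general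
    {I : Type*}
    (p s S : I → ℝ)
    (hp : ∀ n, 0 < p n)
    (hpsum : Summable p) (hp1 : ∑' n, p n = 1)
    (hssum : Summable fun n => (2 : ℝ) ^ (-s n))
    (hs1 : ∑' n, (2 : ℝ) ^ (-s n) ≤ 1)
    (hS : ∀ n, S n = -Real.log (p n) / Real.log 2)
    (hpssum : Summable fun n => p n * s n)
    (hpSsum : Summable fun n => p n * S n) :
    (∑' n, p n * S n ≤ ∑' n, p n * s n) ∧
      ((∑' n, p n * S n = ∑' n, p n * s n) ↔ ∀ n, s n = S n) := by
  set q : I → ℝ := fun n => (2 : ℝ) ^ (-s n)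
  have hlog2 : 0 < log 2 := log_pos one_lt_two
  have hq : ∀ n, 0 < q n := fun n => rpow_pos_of_pos two_pos _
  have hlog_sub : ∀ n, log (p n) - log (q n) = (s n - S n) * log 2 := fun n => by
    rw [log_rpow two_pos, hS n]
    field_simp
    ring
  have hterm : ∀ n, p n * log (p n / q n) = (p n * s n - p n * S n) * log 2 := fun n => by
    rw [log_div (hp n).ne' (hq n).ne', hlog_sub]
    ring
  have hq_eq_iff : ∀ n, p n = q n ↔ s n = S n := fun n => by
    rw [← log_injOn_pos.eq_iff (hp n) (hq n), ← sub_eq_zero, hlog_sub,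
      mul_eq_zero_iff_right hlog2.ne', sub_eq_zero]
  have hdiff : ∑' n, p n * log (p n / q n) = (∑' n, p n * s n - ∑' n, p n * S n) * log 2 := by
    rw [tsum_congr hterm, tsum_mul_right, hpssum.tsum_sub hpSsum]
  have hsum : Summable fun n => p n * log (p n / q n) :=
    ((hpssum.sub hpSsum).mul_right (log 2)).congr fun n => (hterm n).symm
  obtain ⟨hnonneg, hzero_iff⟩ :=
    gibbs_inequality_tsum (fun n => (hp n).le) hq hpsum hssum (hp1 ▸ hs1) hsum
  refine ⟨sub_nonneg.mp ((mul_nonneg_iff_of_pos_right hlog2).mp (hdiff ▸ hnonneg)), ?_⟩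
  rw [eq_comm, ← sub_eq_zero, ← mul_left_inj' hlog2.ne', zero_mul, ← hdiff, hzero_iff]
  exact forall_congr' hq_eq_iff

/-- The entropy `S n = -log₂ (p n)` is the unique optimal decision strategy:
for any strategy `s` satisfying the Kraft inequality `∑ 2^(-s n) ≤ 1`, the expected number
of questions `∑ p n * s n` is at least `∑ p n * S n`, with equality iff `s = S`. -/
theorem entropy_is_unique_optimal_decision_strategy
    {I : Type*} [Countable I] [Nonempty I]
    (p s S : I → ℝ)
    (hp : ∀ n, 0 < p n)
    (hpsum : Summable p) (hp1 : ∑' n, p n = 1)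
    (hssum : Summable fun n => (2 : ℝ) ^ (-s n))
    (hs1 : ∑' n, (2 : ℝ) ^ (-s n) ≤ 1)
    (hS : ∀ n, S n = -Real.log (p n) / Real.log 2)
    (hpssum : Summable fun n => p n * s n)
    (hpSsum : Summable fun n => p n * S n) :
    (∑' n, p n * S n ≤ ∑' n, p n * s n) ∧
      ((∑' n, p n * S n = ∑' n, p n * s n) ↔ ∀ n, s n = S n) :=
  entropy_is_unique_optimal_decision_strategy_general p s S hp hpsum hp1 hssum hs1 hS hpssum hpSsum
end

section
/- Let I be a nonempty countable index set, let k > 0 be a real constant (the Boltzmann constant), and let S : I → ℝ be such that the family (e^(−S_n/k))_{n∈I} is summable with ∑_{n∈I} e^(−S_n/k) = 1, and such that (S_n e^(−S_n/k))_{n∈I} is summable. Then the value of the entropy ∑_{n∈I} S_n e^(−S_n/k) is nonnegative, and it equals zero if and only if I has exactly one element (in which case S_n = 0 for that element). -/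
/-- Third law of thermodynamics for a quantized entropy: if the levels `S n`
satisfy the normalization `∑ exp(-S n / k) = 1`, then the value of the entropy
`∑ S n * exp(-S n / k)` is nonnegative, and it vanishes iff the index set has exactly one
element, in which case that level is zero. -/
theorem third_law_of_thermodynamics
    {I : Type*} [Countable I] [Nonempty I]
    (k : ℝ) (hk : 0 < k) (S : I → ℝ)
    (hsum : Summable fun n => Real.exp (-S n / k))
    (hnorm : ∑' n, Real.exp (-S n / k) = 1)
    (hsum2 : Summable fun n => S n * Real.exp (-S n / k)) :
    (0 ≤ ∑' n, S n * Real.exp (-S n / k)) ∧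
      ((∑' n, S n * Real.exp (-S n / k)) = 0 ↔ ∃ n₀ : I, ∀ n : I, n = n₀) ∧
      ((∑' n, S n * Real.exp (-S n / k)) = 0 → ∀ n : I, S n = 0) := by
  -- each exp term is ≤ 1, hence S n ≥ 0
  have hple : ∀ n, Real.exp (-S n / k) ≤ 1 := by
    intro n
    have := Summable.le_tsum hsum n (fun m _ => (Real.exp_pos _).le)
    rwa [hnorm] at this
  have hSnn : ∀ n, 0 ≤ S n := by
    intro n
    have h1 : -S n / k ≤ 0 := by
      have := Real.exp_le_exp.mp (by simpa using hple n)
      simpa using this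
    have := (div_nonpos_iff.mp h1)
    rcases this with ⟨h, _⟩ | ⟨_, h⟩
    · nlinarith
    · nlinarith
  have htermnn : ∀ n, 0 ≤ S n * Real.exp (-S n / k) := fun n =>
    mul_nonneg (hSnn n) (Real.exp_pos _).le
  have h0 : 0 ≤ ∑' n, S n * Real.exp (-S n / k) := tsum_nonneg htermnn
  -- if sum = 0 then each S n = 0
  have hzero : (∑' n, S n * Real.exp (-S n / k)) = 0 → ∀ n, S n = 0 := by
    intro hz n
    have hle : S n * Real.exp (-S n / k) ≤ 0 := by
      have := Summable.le_tsum hsum2 n (fun m _ => htermnn m)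
      rwa [hz] at this
    have heq : S n * Real.exp (-S n / k) = 0 := le_antisymm hle (htermnn n)
    have := mul_eq_zero.mp heq
    rcases this with h | h
    · exact h
    · exact absurd h (Real.exp_pos _).ne'
  refine ⟨h0, ⟨?_, ?_⟩, hzero⟩
  · intro hz
    have hS0 := hzero hz
    have hp1 : ∀ n, Real.exp (-S n / k) = 1 := by
      intro n; rw [hS0 n]; simp
    obtain ⟨n₀⟩ := ‹Nonempty I›
    refine ⟨n₀, fun n => ?_⟩
    classical
    by_contra hne
    have h2 : (2 : ℝ) ≤ ∑' m, Real.exp (-S m / k) := by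
      have := Summable.sum_le_tsum ({n, n₀} : Finset I)
        (fun m _ => (Real.exp_pos (-S m / k)).le) hsum
      rw [Finset.sum_pair hne, hp1, hp1] at this
      linarith
    rw [hnorm] at h2; linarith
  · rintro ⟨n₀, hn₀⟩
    have hts : ∀ (f : I → ℝ), (∑' n, f n) = f n₀ := fun f =>
      tsum_eq_single n₀ (fun b hb => absurd (hn₀ b) hb)
    have hp1 : Real.exp (-S n₀ / k) = 1 := by rw [← hts fun n => Real.exp (-S n / k)]; exact hnorm
    have : -S n₀ / k = 0 := by
      rw [← Real.log_exp (-S n₀ / k), hp1, Real.log_one]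
    have hS0 : S n₀ = 0 := by
      field_simp at this
      linarith
    rw [hts fun n => S n * Real.exp (-S n / k), hS0, zero_mul]
end

section
/- Let n ≥ 1 and let S and S_c be Hermitian complex n×n matrices, and k > 0 a real constant, such that trace(exp(−S/k)) = 1 and trace(exp(−S_c/k)) = 1. Then the real number Re trace(exp(−S/k)·S) is at most Re trace(exp(−S/k)·S_c), and equality holds if and only if S_c = S. -/
/-!
Diagonalize `A = U diag(a) U*` and `B = V diag(b) V*`. With the weights `P i j = ‖(U* V) i j‖²`,
every trace in `tr e^B - tr e^A - tr (e^A (B - A))` becomes a weighted double sum over pairs of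
eigenvalues, and the whole expression is `∑ P i j (e^{b j} - e^{a i} - e^{a i} (b j - a i))`, a
nonnegative combination of tangent-line gaps of the strictly convex function `exp`. If it vanishes,
`P i j ≠ 0` forces `a i = b j`, so `diag(a) (U* V) = (U* V) diag(b)`, i.e. `A = B`.
For `A = -S/k` and `B = -S_c/k`, whose exponentials both have trace `1`, this reads
`tr (e^{-S/k} (S - S_c)) / k ≤ 0`, with equality only for `S_c = S`.
-/

open Matrix Unitary

theorem Real.exp_add_mul_sub_le (x y : ℝ) : Real.exp x + Real.exp x * (y - x) ≤ Real.exp y := by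
  have hle := Real.add_one_le_exp (y - x)
  rw [show y = x + (y - x) by ring, Real.exp_add, add_sub_cancel_left]
  nlinarith [Real.exp_pos x]

theorem Real.exp_add_mul_sub_lt {x y : ℝ} (h : x ≠ y) :
    Real.exp x + Real.exp x * (y - x) < Real.exp y := by
  have hlt := Real.add_one_lt_exp (sub_ne_zero.mpr h.symm)
  rw [show y = x + (y - x) by ring, Real.exp_add, add_sub_cancel_left]
  nlinarith [Real.exp_pos x]

namespace Matrix

variable {𝕜 ι : Type*} [RCLike 𝕜] [Fintype ι] [DecidableEq ι]

theorem re_trace_diagonal_mul_mul_diagonal_mul_star (W : Matrix ι ι 𝕜) (d e : ι → ℝ) :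
    RCLike.re (trace
        (diagonal (RCLike.ofReal ∘ d) * W * diagonal (RCLike.ofReal ∘ e) * star W)) =
      ∑ i, ∑ j, d i * e j * ‖W i j‖ ^ 2 := by
  simp only [trace, diag_apply, mul_apply (M := _ * diagonal _), mul_diagonal, diagonal_mul,
    star_apply, map_sum, Function.comp_apply]
  refine Finset.sum_congr rfl fun i _ => Finset.sum_congr rfl fun j _ => ?_
  rw [show (d i : 𝕜) * W i j * e j * star (W i j) =
      ((d i * e j : ℝ) : 𝕜) * (W i j * star (W i j)) by push_cast; ring,
    RCLike.star_def, RCLike.mul_conj]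
  norm_cast

theorem trace_conjStarAlgAut (U : unitary (Matrix ι ι 𝕜)) (A : Matrix ι ι 𝕜) :
    trace (conjStarAlgAut 𝕜 _ U A) = trace A := by
  rw [conjStarAlgAut_apply, trace_mul_cycle, coe_star_mul_self, one_mul]

theorem re_trace_conjStarAlgAut_diagonal_mul_conjStarAlgAut_diagonal
    (U V : unitary (Matrix ι ι 𝕜)) (d e : ι → ℝ) :
    RCLike.re (trace (conjStarAlgAut 𝕜 _ U (diagonal (RCLike.ofReal ∘ d)) *
      conjStarAlgAut 𝕜 _ V (diagonal (RCLike.ofReal ∘ e)))) =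
      ∑ i, ∑ j, d i * e j * ‖((star U * V : unitary (Matrix ι ι 𝕜)) : Matrix ι ι 𝕜) i j‖ ^ 2 := by
  have hV : V = U * (star U * V) := by rw [← mul_assoc, mul_star_self, one_mul]
  rw [hV, conjStarAlgAut_mul_apply, ← map_mul, trace_conjStarAlgAut, conjStarAlgAut_apply,
    ← mul_assoc, ← mul_assoc, ← hV, re_trace_diagonal_mul_mul_diagonal_mul_star]

theorem exp_conjStarAlgAut (U : unitary (Matrix ι ι 𝕜)) (A : Matrix ι ι 𝕜) :
    NormedSpace.exp (conjStarAlgAut 𝕜 _ U A) = conjStarAlgAut 𝕜 _ U (NormedSpace.exp A) := by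
  have hinv : (U : Matrix ι ι 𝕜)⁻¹ = star (U : Matrix ι ι 𝕜) :=
    inv_eq_left_inv (star_mul_self_of_mem U.2)
  simpa only [conjStarAlgAut_apply, hinv] using exp_conj _ A (isUnit_coe (U := U))

theorem exp_diagonal_ofReal (d : ι → ℝ) :
    NormedSpace.exp (diagonal (RCLike.ofReal ∘ d) : Matrix ι ι 𝕜) =
      diagonal (RCLike.ofReal ∘ Real.exp ∘ d) := by
  rw [exp_diagonal]
  congr 1
  funext i
  simp only [Pi.coe_exp, Function.comp_apply, Real.exp_eq_exp_ℝ,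
    NormedSpace.map_exp (algebraMap ℝ 𝕜) (continuous_algebraMap ℝ 𝕜)]

theorem IsHermitian.exp_eq_cfc {A : Matrix ι ι 𝕜} (hA : A.IsHermitian) :
    NormedSpace.exp A = hA.cfc Real.exp := by
  conv_lhs => rw [hA.spectral_theorem]
  rw [exp_conjStarAlgAut, exp_diagonal_ofReal]
  rfl

theorem conjStarAlgAut_diagonal_eq_of_ne_zero (U V : unitary (Matrix ι ι 𝕜)) {a b : ι → ℝ}
    (h : ∀ i j, ((star U * V : unitary (Matrix ι ι 𝕜)) : Matrix ι ι 𝕜) i j ≠ 0 → a i = b j) :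
    conjStarAlgAut 𝕜 _ U (diagonal (RCLike.ofReal ∘ a)) =
      conjStarAlgAut 𝕜 _ V (diagonal (RCLike.ofReal ∘ b)) := by
  set W := star U * V
  have hV : V = U * W := by rw [← mul_assoc, mul_star_self, one_mul]
  have hcomm : diagonal (RCLike.ofReal ∘ a) * (W : Matrix ι ι 𝕜) =
      (W : Matrix ι ι 𝕜) * diagonal (RCLike.ofReal ∘ b) := by
    ext i j
    rw [diagonal_mul, mul_diagonal]
    by_cases hW : (W : Matrix ι ι 𝕜) i j = 0
    · simp [hW]
    · simp [h i j hW, mul_comm]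
  rw [hV, conjStarAlgAut_mul_apply, conjStarAlgAut_apply (u := W), ← hcomm, mul_assoc,
    mul_star_self_of_mem W.2, mul_one]

end Matrix

namespace Matrix.IsHermitian

variable {𝕜 ι : Type*} [RCLike 𝕜] [Fintype ι] [DecidableEq ι] {A B : Matrix ι ι 𝕜}

theorem re_trace_exp_sub_eq_sum (hA : A.IsHermitian) (hB : B.IsHermitian) :
    RCLike.re (trace (NormedSpace.exp B)) - RCLike.re (trace (NormedSpace.exp A)) -
        RCLike.re (trace (NormedSpace.exp A * (B - A))) =
      ∑ i, ∑ j, ‖((star hA.eigenvectorUnitary * hB.eigenvectorUnitary :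
          unitary (Matrix ι ι 𝕜)) : Matrix ι ι 𝕜) i j‖ ^ 2 *
        (Real.exp (hB.eigenvalues j) - (Real.exp (hA.eigenvalues i) +
          Real.exp (hA.eigenvalues i) * (hB.eigenvalues j - hA.eigenvalues i))) := by
  set U := hA.eigenvectorUnitary
  set V := hB.eigenvectorUnitary
  set a := hA.eigenvalues
  set b := hB.eigenvalues
  set P : ι → ι → ℝ := fun i j =>
    ‖((star U * V : unitary (Matrix ι ι 𝕜)) : Matrix ι ι 𝕜) i j‖ ^ 2
  -- Inserting `1 = U diag(1) U*` or `1 = V diag(1) V*` brings each trace into the shape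
  -- `tr (U diag(d) U* · V diag(e) V*)`, which is `∑ d i * e j * P i j`.
  have one_eq_conj (U : unitary (Matrix ι ι 𝕜)) :
      (1 : Matrix ι ι 𝕜) = conjStarAlgAut 𝕜 _ U (diagonal (RCLike.ofReal ∘ fun _ => 1)) := by
    simp [Function.comp_def]
  have hexpA_mul_A : NormedSpace.exp A * A =
      conjStarAlgAut 𝕜 _ U (diagonal (RCLike.ofReal ∘ (Real.exp ∘ a * a))) := by
    conv_lhs => arg 2; rw [hA.spectral_theorem]
    rw [hA.exp_eq_cfc, IsHermitian.cfc, ← map_mul, diagonal_mul_diagonal]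
    congr 2
    funext i
    simp [a]
  have hTB : RCLike.re (trace (NormedSpace.exp B)) = ∑ i, ∑ j, 1 * Real.exp (b j) * P i j := by
    rw [← one_mul (NormedSpace.exp B), one_eq_conj U, hB.exp_eq_cfc, IsHermitian.cfc,
      re_trace_conjStarAlgAut_diagonal_mul_conjStarAlgAut_diagonal]
    rfl
  have hTA : RCLike.re (trace (NormedSpace.exp A)) = ∑ i, ∑ j, Real.exp (a i) * 1 * P i j := by
    rw [← mul_one (NormedSpace.exp A), one_eq_conj V, hA.exp_eq_cfc, IsHermitian.cfc,
      re_trace_conjStarAlgAut_diagonal_mul_conjStarAlgAut_diagonal]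
    rfl
  have hTAB : RCLike.re (trace (NormedSpace.exp A * B)) =
      ∑ i, ∑ j, Real.exp (a i) * b j * P i j := by
    rw [hB.spectral_theorem, hA.exp_eq_cfc, IsHermitian.cfc,
      re_trace_conjStarAlgAut_diagonal_mul_conjStarAlgAut_diagonal]
    rfl
  have hTAA : RCLike.re (trace (NormedSpace.exp A * A)) =
      ∑ i, ∑ j, Real.exp (a i) * a i * 1 * P i j := by
    rw [hexpA_mul_A, ← mul_one (conjStarAlgAut _ _ _ _), one_eq_conj V,
      re_trace_conjStarAlgAut_diagonal_mul_conjStarAlgAut_diagonal]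
    rfl
  rw [mul_sub, trace_sub, map_sub, hTB, hTA, hTAB, hTAA]
  simp only [← Finset.sum_sub_distrib]
  refine Finset.sum_congr rfl fun i _ => Finset.sum_congr rfl fun j _ => ?_
  ring

theorem re_trace_exp_add_re_trace_exp_mul_sub_le (hA : A.IsHermitian) (hB : B.IsHermitian) :
    RCLike.re (trace (NormedSpace.exp A)) + RCLike.re (trace (NormedSpace.exp A * (B - A))) ≤
      RCLike.re (trace (NormedSpace.exp B)) := by
  rw [← sub_nonneg, ← sub_sub, hA.re_trace_exp_sub_eq_sum hB]
  exact Finset.sum_nonneg fun i _ => Finset.sum_nonneg fun j _ =>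
    mul_nonneg (sq_nonneg _) (sub_nonneg.2 (Real.exp_add_mul_sub_le _ _))

theorem re_trace_exp_add_re_trace_exp_mul_sub_eq_iff (hA : A.IsHermitian) (hB : B.IsHermitian) :
    RCLike.re (trace (NormedSpace.exp A)) + RCLike.re (trace (NormedSpace.exp A * (B - A))) =
      RCLike.re (trace (NormedSpace.exp B)) ↔ A = B := by
  refine ⟨fun h => ?_, by rintro rfl; simp⟩
  rw [eq_comm, ← sub_eq_zero, ← sub_sub, hA.re_trace_exp_sub_eq_sum hB] at h
  rw [hA.spectral_theorem, hB.spectral_theorem]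
  refine conjStarAlgAut_diagonal_eq_of_ne_zero _ _ fun i j hW => ?_
  by_contra hne
  refine (Finset.sum_pos' (fun i _ => Finset.sum_nonneg fun j _ => ?_)
    ⟨i, Finset.mem_univ i, Finset.sum_pos' (fun j _ => ?_) ⟨j, Finset.mem_univ j, ?_⟩⟩).ne' h
  · exact mul_nonneg (sq_nonneg _) (sub_nonneg.2 (Real.exp_add_mul_sub_le _ _))
  · exact mul_nonneg (sq_nonneg _) (sub_nonneg.2 (Real.exp_add_mul_sub_le _ _))
  · exact mul_pos (pow_pos (norm_pos_iff.2 hW) 2) (sub_pos.2 (Real.exp_add_mul_sub_lt hne))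

end Matrix.IsHermitian

theorem gibbs_state_entropy_minimal_general
    {n : ℕ} (k : ℝ) (hk : 0 < k)
    (S Sc : Matrix (Fin n) (Fin n) ℂ)
    (hS : S.IsHermitian) (hSc : Sc.IsHermitian)
    (hS1 : (Matrix.trace (NormedSpace.exp (-(k⁻¹ • S)))).re = 1)
    (hSc1 : (Matrix.trace (NormedSpace.exp (-(k⁻¹ • Sc)))).re = 1) :
    (Matrix.trace (NormedSpace.exp (-(k⁻¹ • S)) * S)).re
        ≤ (Matrix.trace (NormedSpace.exp (-(k⁻¹ • S)) * Sc)).re ∧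
      ((Matrix.trace (NormedSpace.exp (-(k⁻¹ • S)) * S)).re
          = (Matrix.trace (NormedSpace.exp (-(k⁻¹ • S)) * Sc)).re ↔ Sc = S) := by
  have hA : (-(k⁻¹ • S)).IsHermitian := (hS.smul (IsSelfAdjoint.all k⁻¹)).neg
  have hB : (-(k⁻¹ • Sc)).IsHermitian := (hSc.smul (IsSelfAdjoint.all k⁻¹)).neg
  have hdiff : (trace (NormedSpace.exp (-(k⁻¹ • S)) * (-(k⁻¹ • Sc) - -(k⁻¹ • S)))).re =
      k⁻¹ * ((trace (NormedSpace.exp (-(k⁻¹ • S)) * S)).re -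
        (trace (NormedSpace.exp (-(k⁻¹ • S)) * Sc)).re) := by
    rw [neg_sub_neg, ← smul_sub, Matrix.mul_smul, trace_smul, mul_sub, trace_sub,
      Complex.real_smul, Complex.re_ofReal_mul, Complex.sub_re]
  have hcancel : -(k⁻¹ • S) = -(k⁻¹ • Sc) ↔ Sc = S := by
    rw [neg_inj, (smul_right_injective _ (inv_ne_zero hk.ne')).eq_iff, eq_comm]
  have hle := hA.re_trace_exp_add_re_trace_exp_mul_sub_le hB
  have heq := hA.re_trace_exp_add_re_trace_exp_mul_sub_eq_iff hB
  simp only [RCLike.re_to_complex, hS1, hSc1, hdiff] at hle heq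
  refine ⟨sub_nonpos.1 <|
    nonpos_of_mul_nonpos_right ((add_le_iff_nonpos_right 1).1 hle) (inv_pos.2 hk), ?_⟩
  rw [← hcancel, ← heq, add_eq_left, mul_eq_zero, sub_eq_zero, or_iff_right (inv_ne_zero hk.ne')]

/-- In the matrix model, the value `⟨S⟩ = Re tr(exp(-S/k)·S)` of the entropy `S`
of a Gibbs state is at most the value `⟨S_c⟩ = Re tr(exp(-S/k)·S_c)` of any other entropy
`S_c`, with equality iff `S_c = S`. -/
theorem gibbs_state_entropy_minimal
    {n : ℕ} (hn : 1 ≤ n) (k : ℝ) (hk : 0 < k)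
    (S Sc : Matrix (Fin n) (Fin n) ℂ)
    (hS : S.IsHermitian) (hSc : Sc.IsHermitian)
    (hS1 : (Matrix.trace (NormedSpace.exp (-(k⁻¹ • S)))).re = 1)
    (hSc1 : (Matrix.trace (NormedSpace.exp (-(k⁻¹ • Sc)))).re = 1) :
    (Matrix.trace (NormedSpace.exp (-(k⁻¹ • S)) * S)).re
        ≤ (Matrix.trace (NormedSpace.exp (-(k⁻¹ • S)) * Sc)).re ∧
      ((Matrix.trace (NormedSpace.exp (-(k⁻¹ • S)) * S)).re
          = (Matrix.trace (NormedSpace.exp (-(k⁻¹ • S)) * Sc)).re ↔ Sc = S) :=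
  gibbs_state_entropy_minimal_general k hk S Sc hS hSc hS1 hSc1
end

section
/- Let n ≥ 1 and let f and g be Hermitian complex n×n matrices. Define W(h) = −log Re trace(exp(−h)) for Hermitian h, and Z = Re trace(exp(−f)). Then the Gibbs–Bogoliubov inequality holds: W(g) ≤ W(f) + Z⁻¹ · Re trace(exp(−f)·(g − f)). -/
/-!
Diagonalize `f = U diag(λ) U*` and put `cᵢ = Re (U* g U)ᵢᵢ`. Peierls' inequality (Jensen's
inequality for the spectral measure of `g` in the state `U eᵢ`) gives
`exp (-cᵢ) ≤ Re (U* e^{-g} U)ᵢᵢ`, hence `tr e^{-g} ≥ ∑ᵢ exp (-cᵢ)`. This reduces the claim to the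
commuting case, which is the supporting-hyperplane inequality at `-λ` for the convex function
`x ↦ log ∑ᵢ exp xᵢ`, whose gradient there is the vector of Gibbs weights `e^{-λᵢ} / Z`.
-/

open Matrix

/-- The generating functional `W(h) = -log Re tr(exp(-h))` of a Hermitian matrix `h`. -/
noncomputable def genFunctional {n : ℕ} (h : Matrix (Fin n) (Fin n) ℂ) : ℝ :=
  -Real.log ((Matrix.trace (NormedSpace.exp (-h))).re)

namespace Real

theorem log_sum_exp_add_inv_mul_sum_le {ι : Type*} [Fintype ι] [Nonempty ι] (a b : ι → ℝ) :
    log (∑ i, exp (a i)) + (∑ i, exp (a i))⁻¹ * ∑ i, exp (a i) * (b i - a i)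
      ≤ log (∑ i, exp (b i)) := by
  set Z := ∑ i, exp (a i)
  have hZ : 0 < Z := Finset.sum_pos (fun i _ => exp_pos _) Finset.univ_nonempty
  have hweights : ∑ i, exp (a i) / Z = 1 := by rw [← Finset.sum_div, div_self hZ.ne']
  have hjensen := convexOn_exp.map_sum_le (t := Finset.univ) (w := fun i => exp (a i) / Z)
    (p := fun i => b i - a i) (fun i _ => by positivity) hweights (fun _ _ => Set.mem_univ _)
  have hmean : ∑ i, (exp (a i) / Z) • exp (b i - a i) = Z⁻¹ * ∑ i, exp (b i) := by
    rw [Finset.mul_sum]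
    refine Finset.sum_congr rfl fun i _ => ?_
    rw [smul_eq_mul, exp_sub]
    field_simp
  have hlin : ∑ i, (exp (a i) / Z) • (b i - a i) = Z⁻¹ * ∑ i, exp (a i) * (b i - a i) := by
    rw [Finset.mul_sum]
    refine Finset.sum_congr rfl fun i _ => ?_
    rw [smul_eq_mul]
    ring
  rw [hmean, hlin, ← le_log_iff_exp_le (by positivity), log_mul (inv_ne_zero hZ.ne')
    (by positivity), log_inv] at hjensen
  linarith

end Real

namespace Matrix

variable {ι 𝕜 : Type*} [Fintype ι] [DecidableEq ι] [RCLike 𝕜]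

theorem star_mul_diagonal_mul_apply_self (W : Matrix ι ι 𝕜) (d : ι → ℝ) (i : ι) :
    (star W * diagonal (RCLike.ofReal ∘ d) * W : Matrix ι ι 𝕜) i i
      = ∑ j, ((‖W j i‖ ^ 2 * d j : ℝ) : 𝕜) := by
  rw [mul_apply]
  refine Finset.sum_congr rfl fun j _ => ?_
  rw [mul_diagonal, star_apply, Function.comp_apply, RCLike.star_def, mul_right_comm,
    RCLike.conj_mul]
  push_cast
  ring

theorem sum_norm_sq_apply_of_mem_unitaryGroup {W : Matrix ι ι 𝕜} (hW : W ∈ unitaryGroup ι 𝕜)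
    (i : ι) : ∑ j, ‖W j i‖ ^ 2 = 1 := by
  have h := star_mul_diagonal_mul_apply_self W 1 i
  simp only [Pi.one_apply, mul_one] at h
  rw [show RCLike.ofReal ∘ (1 : ι → ℝ) = (1 : ι → 𝕜) by ext; simp,
    show diagonal (1 : ι → 𝕜) = 1 from diagonal_one, Matrix.mul_one,
    (mem_unitaryGroup_iff').mp hW, one_apply_eq] at h
  exact_mod_cast h.symm

namespace IsHermitian

variable {A : Matrix ι ι 𝕜} (hA : A.IsHermitian)

theorem exp_eq_cfc_s3 : NormedSpace.exp A = hA.cfc Real.exp := by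
  have hdiag : NormedSpace.exp (diagonal (RCLike.ofReal ∘ hA.eigenvalues) : Matrix ι ι 𝕜)
      = diagonal (RCLike.ofReal ∘ Real.exp ∘ hA.eigenvalues) := by
    rw [exp_diagonal]
    congr 1
    ext i
    simp [Real.exp_eq_exp_ℝ, NormedSpace.map_exp (algebraMap ℝ 𝕜) (continuous_algebraMap ℝ 𝕜)]
  conv_lhs => rw [hA.spectral_theorem]
  rw [IsHermitian.cfc, ← hdiag, Unitary.conjStarAlgAut_apply, Unitary.conjStarAlgAut_apply]
  exact exp_units_conj (Unitary.toUnits hA.eigenvectorUnitary) _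

theorem trace_cfc_mul (φ : ℝ → ℝ) (M : Matrix ι ι 𝕜) :
    trace (hA.cfc φ * M) = ∑ i, (φ (hA.eigenvalues i) : 𝕜) *
      (star (hA.eigenvectorUnitary : Matrix ι ι 𝕜) * M * hA.eigenvectorUnitary) i i := by
  rw [IsHermitian.cfc, Unitary.conjStarAlgAut_apply, Matrix.mul_assoc, trace_mul_cycle]
  simp only [trace, diag, mul_diagonal, Function.comp_apply, mul_comm]

theorem map_re_conj_apply_self_le_cfc {φ : ℝ → ℝ} (hφ : ConvexOn ℝ Set.univ φ)
    {U : Matrix ι ι 𝕜} (hU : U ∈ unitaryGroup ι 𝕜) (i : ι) :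
    φ (RCLike.re ((star U * A * U) i i)) ≤ RCLike.re ((star U * hA.cfc φ * U) i i) := by
  set V : Matrix ι ι 𝕜 := (hA.eigenvectorUnitary : Matrix ι ι 𝕜)
  have hconj : ∀ d : ι → ℝ, star U * (V * diagonal (RCLike.ofReal ∘ d) * star V) * U
      = star (star V * U) * diagonal (RCLike.ofReal ∘ d) * (star V * U) := by
    intro d
    simp only [star_mul, star_star, Matrix.mul_assoc]
  have hW : star V * U ∈ unitaryGroup ι 𝕜 :=
    Submonoid.mul_mem _ (Unitary.star_mem hA.eigenvectorUnitary.2) hU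
  rw [IsHermitian.cfc, Unitary.conjStarAlgAut_apply]
  conv_lhs => rw [hA.spectral_theorem, Unitary.conjStarAlgAut_apply]
  rw [hconj, hconj, star_mul_diagonal_mul_apply_self, star_mul_diagonal_mul_apply_self]
  simp only [← RCLike.ofReal_sum, RCLike.ofReal_re, Function.comp_apply]
  exact hφ.map_sum_le (fun j _ => sq_nonneg _) (sum_norm_sq_apply_of_mem_unitaryGroup hW i)
    (fun j _ => Set.mem_univ _)

end IsHermitian

theorem IsHermitian.log_re_trace_exp_add_le [Nonempty ι] {A B : Matrix ι ι 𝕜}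
    (hA : A.IsHermitian) (hB : B.IsHermitian) :
    Real.log (RCLike.re (trace (NormedSpace.exp A)))
        + (RCLike.re (trace (NormedSpace.exp A)))⁻¹
          * RCLike.re (trace (NormedSpace.exp A * (B - A)))
      ≤ Real.log (RCLike.re (trace (NormedSpace.exp B))) := by
  set U : Matrix ι ι 𝕜 := (hA.eigenvectorUnitary : Matrix ι ι 𝕜)
  set a := hA.eigenvalues
  set b : ι → ℝ := fun i => RCLike.re ((star U * B * U) i i)
  have htraceA : RCLike.re (trace (NormedSpace.exp A)) = ∑ i, Real.exp (a i) := by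
    rw [← Matrix.mul_one (NormedSpace.exp A), hA.exp_eq_cfc_s3, hA.trace_cfc_mul, Matrix.mul_one,
      (mem_unitaryGroup_iff').mp hA.eigenvectorUnitary.2]
    simp [a]
  have htraceAB : RCLike.re (trace (NormedSpace.exp A * (B - A)))
      = ∑ i, Real.exp (a i) * (b i - a i) := by
    have hdiag : star U * A * U = diagonal (RCLike.ofReal ∘ a) := by
      simpa using hA.conjStarAlgAut_star_eigenvectorUnitary
    rw [hA.exp_eq_cfc_s3, hA.trace_cfc_mul, Matrix.mul_sub, Matrix.sub_mul, hdiag]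
    simp [a, b, U]
  have htraceB : RCLike.re (trace (NormedSpace.exp B))
      = ∑ i, RCLike.re ((star U * NormedSpace.exp B * U) i i) := by
    have hconj : trace (star U * NormedSpace.exp B * U) = trace (NormedSpace.exp B) := by
      rw [trace_mul_cycle, (mem_unitaryGroup_iff).mp hA.eigenvectorUnitary.2, Matrix.one_mul]
    rw [← hconj, trace, map_sum]
    rfl
  have hpeierls : ∀ i, Real.exp (b i) ≤ RCLike.re ((star U * NormedSpace.exp B * U) i i) := by
    intro i
    rw [hB.exp_eq_cfc_s3]
    exact hB.map_re_conj_apply_self_le_cfc convexOn_exp hA.eigenvectorUnitary.2 i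
  rw [htraceA, htraceAB, htraceB]
  calc _ ≤ Real.log (∑ i, Real.exp (b i)) := Real.log_sum_exp_add_inv_mul_sum_le a b
    _ ≤ _ := Real.log_le_log (by positivity) (Finset.sum_le_sum fun i _ => hpeierls i)

end Matrix

theorem gibbs_bogoliubov_inequality_general
    {n : ℕ}
    (f g : Matrix (Fin n) (Fin n) ℂ)
    (hf : f.IsHermitian) (hg : g.IsHermitian) :
    genFunctional g
      ≤ genFunctional f
        + ((Matrix.trace (NormedSpace.exp (-f))).re)⁻¹
          * (Matrix.trace (NormedSpace.exp (-f) * (g - f))).re := by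
  rcases isEmpty_or_nonempty (Fin n) with _ | _
  · -- all traces are `0`, and `Real.log 0 = 0`, so both sides vanish
    simp [genFunctional, trace]
  · have h := hf.neg.log_re_trace_exp_add_le hg.neg
    rw [neg_sub_neg, ← neg_sub, Matrix.mul_neg, trace_neg] at h
    simp only [RCLike.re_to_complex, Complex.neg_re, mul_neg] at h
    unfold genFunctional
    linarith

/-- The Gibbs–Bogoliubov inequality
`W(g) ≤ W(f) + Z⁻¹ · Re tr(exp(-f)·(g - f))`, where `Z = Re tr(exp(-f))`. -/
theorem gibbs_bogoliubov_inequality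
    {n : ℕ} (hn : 1 ≤ n)
    (f g : Matrix (Fin n) (Fin n) ℂ)
    (hf : f.IsHermitian) (hg : g.IsHermitian) :
    genFunctional g
      ≤ genFunctional f
        + ((Matrix.trace (NormedSpace.exp (-f))).re)⁻¹
          * (Matrix.trace (NormedSpace.exp (-f) * (g - f))).re :=
  gibbs_bogoliubov_inequality_general f g hf hg
end

section
/- Let n ≥ 1 and let f and g be Hermitian complex n×n matrices with W(h) := −log Re trace(exp(−h)) and Z := Re trace(exp(−f)). If equality holds in the Gibbs–Bogoliubov inequality, i.e. W(g) = W(f) + Z⁻¹ · Re trace(exp(−f)·(g − f)), then g − f is a real scalar multiple of the identity matrix; conversely, if g = f + c·1 for some real number c then equality holds. -/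
open Matrix

/-!
Diagonalise `f = U diag(E) U*` and `g = V diag(F) V*`. The matrix `P i j = ‖(U* V) i j‖²` is
doubly stochastic, and with the Gibbs weights `p = e^{-E} / Z(E)`, `q = e^{-F} / Z(F)` the gap
`W(f) + ⟨g - f⟩_f - W(g)` equals `∑ i j, P i j * p i * (log p i - log q j)`, which the row and
column sums of `P` turn into `∑ i j, P i j * q j * klFun (p i / q j) ≥ 0`. At equality every term
with `P i j ≠ 0` vanishes, so `p i = q j` there, i.e. `F j = E i + c` for one constant `c`. Then
`(U* V) diag(F) = diag(E + c) (U* V)`, which is `g = f + c • 1`.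
-/

open Finset Real InformationTheory

namespace Matrix

section DoublyStochastic

variable {ι : Type*} [Fintype ι] [DecidableEq ι] {P : Matrix ι ι ℝ}

lemma sum_sum_mul_left_of_mem_doublyStochastic (hP : P ∈ doublyStochastic ℝ ι) (x : ι → ℝ) :
    ∑ i, ∑ j, P i j * x i = ∑ i, x i := by
  simp only [← sum_mul, sum_row_of_mem_doublyStochastic hP, one_mul]

lemma sum_sum_mul_right_of_mem_doublyStochastic (hP : P ∈ doublyStochastic ℝ ι) (y : ι → ℝ) :
    ∑ i, ∑ j, P i j * y j = ∑ j, y j := by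
  rw [sum_comm]
  simp only [← sum_mul, sum_col_of_mem_doublyStochastic hP, one_mul]

variable {p q : ι → ℝ}

lemma sum_sum_mul_log_sub_log_eq_sum_sum_klFun (hP : P ∈ doublyStochastic ℝ ι)
    (hp : ∀ i, 0 < p i) (hq : ∀ j, 0 < q j) (hpq : ∑ i, p i = ∑ j, q j) :
    ∑ i, ∑ j, P i j * (p i * (log (p i) - log (q j))) =
      ∑ i, ∑ j, P i j * (q j * klFun (p i / q j)) := by
  have hterm : ∀ i j, P i j * (q j * klFun (p i / q j)) =
      P i j * (p i * (log (p i) - log (q j))) + P i j * q j - P i j * p i := by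
    intro i j
    rw [klFun_apply, log_div (hp i).ne' (hq j).ne']
    field_simp [(hq j).ne']
  simp only [hterm, sum_add_distrib, sum_sub_distrib,
    sum_sum_mul_left_of_mem_doublyStochastic hP, sum_sum_mul_right_of_mem_doublyStochastic hP, hpq]
  ring

lemma eq_of_sum_sum_mul_log_sub_log_eq_zero (hP : P ∈ doublyStochastic ℝ ι)
    (hp : ∀ i, 0 < p i) (hq : ∀ j, 0 < q j) (hpq : ∑ i, p i = ∑ j, q j)
    (h : ∑ i, ∑ j, P i j * (p i * (log (p i) - log (q j))) = 0) {i j : ι} (hij : P i j ≠ 0) :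
    p i = q j := by
  have hnonneg : ∀ i j, 0 ≤ P i j * (q j * klFun (p i / q j)) := fun i j =>
    mul_nonneg (hP.1 i j) (mul_nonneg (hq j).le (klFun_nonneg (div_pos (hp i) (hq j)).le))
  rw [sum_sum_mul_log_sub_log_eq_sum_sum_klFun hP hp hq hpq,
    Fintype.sum_eq_zero_iff_of_nonneg fun i => sum_nonneg fun j _ => hnonneg i j] at h
  have hterm : P i j * (q j * klFun (p i / q j)) = 0 :=
    congrFun ((Fintype.sum_eq_zero_iff_of_nonneg (hnonneg i)).1 (congrFun h i)) j
  have hkl : klFun (p i / q j) = 0 := by simpa [hij, (hq j).ne'] using hterm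
  rwa [klFun_eq_zero_iff (div_pos (hp i) (hq j)).le, div_eq_one_iff_eq (hq j).ne'] at hkl

end DoublyStochastic

end Matrix

section Gibbs

variable {ι : Type*} [Fintype ι]

noncomputable def partitionFunction (E : ι → ℝ) : ℝ :=
  ∑ i, exp (-E i)

noncomputable def gibbsWeight (E : ι → ℝ) (i : ι) : ℝ :=
  exp (-E i) / partitionFunction E

lemma partitionFunction_add_const (E : ι → ℝ) (c : ℝ) :
    partitionFunction (fun i => E i + c) = exp (-c) * partitionFunction E := by
  simp only [partitionFunction, mul_sum, ← exp_add, neg_add, add_comm]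

variable [Nonempty ι] (E : ι → ℝ)

lemma partitionFunction_pos : 0 < partitionFunction E :=
  sum_pos (fun _ _ => exp_pos _) univ_nonempty

lemma gibbsWeight_pos (i : ι) : 0 < gibbsWeight E i :=
  div_pos (exp_pos _) (partitionFunction_pos E)

lemma sum_gibbsWeight : ∑ i, gibbsWeight E i = 1 := by
  simp only [gibbsWeight, ← sum_div]
  exact div_self (partitionFunction_pos E).ne'

lemma log_gibbsWeight (i : ι) : log (gibbsWeight E i) = -E i - log (partitionFunction E) := by
  rw [gibbsWeight, log_div (exp_pos _).ne' (partitionFunction_pos E).ne', log_exp]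

lemma add_log_partitionFunction_eq_of_gibbsBogoliubov_eq [DecidableEq ι] {P : Matrix ι ι ℝ}
    (hP : P ∈ doublyStochastic ℝ ι) (F : ι → ℝ)
    (h : -log (partitionFunction F) = -log (partitionFunction E) + (partitionFunction E)⁻¹ *
      (∑ i, ∑ j, P i j * (exp (-E i) * F j) - ∑ i, exp (-E i) * E i))
    {i j : ι} (hij : P i j ≠ 0) :
    F j + log (partitionFunction F) = E i + log (partitionFunction E) := by
  set Z := partitionFunction E
  have hrelEntropy : ∑ i, ∑ j, P i j *
      (gibbsWeight E i * (log (gibbsWeight E i) - log (gibbsWeight F j))) = 0 := by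
    have hterm : ∀ i j,
        P i j * (gibbsWeight E i * (log (gibbsWeight E i) - log (gibbsWeight F j))) =
        Z⁻¹ * (P i j * (exp (-E i) * F j)) - Z⁻¹ * (P i j * (exp (-E i) * E i)) +
          (log (partitionFunction F) - log Z) * (P i j * gibbsWeight E i) := by
      intro i j
      rw [log_gibbsWeight, log_gibbsWeight, gibbsWeight, div_eq_inv_mul]
      ring
    simp only [hterm, sum_add_distrib, sum_sub_distrib, ← mul_sum,
      sum_sum_mul_left_of_mem_doublyStochastic hP, sum_gibbsWeight]
    linarith
  have hweight := eq_of_sum_sum_mul_log_sub_log_eq_zero hP (gibbsWeight_pos E) (gibbsWeight_pos F)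
    (by rw [sum_gibbsWeight, sum_gibbsWeight]) hrelEntropy hij
  have hlog := congrArg log hweight
  rw [log_gibbsWeight, log_gibbsWeight] at hlog
  linarith

end Gibbs

namespace Matrix

section Spectral

variable {𝕜 ι : Type*} [RCLike 𝕜] [Fintype ι] [DecidableEq ι]

lemma norm_sq_entries_mem_doublyStochastic {W : Matrix ι ι 𝕜} (hW : W ∈ unitaryGroup ι 𝕜) :
    of (fun i j => ‖W i j‖ ^ 2) ∈ doublyStochastic ℝ ι := by
  refine mem_doublyStochastic_iff_sum.2 ⟨fun i j => sq_nonneg ‖W i j‖, fun i => ?_, fun j => ?_⟩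
  · have h := congrFun (congrFun (mem_unitaryGroup_iff.1 hW) i) i
    simp only [mul_apply, star_apply, RCLike.star_def, RCLike.mul_conj, one_apply_eq] at h
    exact_mod_cast h
  · have h := congrFun (congrFun (mem_unitaryGroup_iff'.1 hW) j) j
    simp only [mul_apply, star_apply, RCLike.star_def, RCLike.conj_mul, one_apply_eq] at h
    exact_mod_cast h

lemma IsHermitian.exists_unitary_eq_conj_diagonal {A : Matrix ι ι 𝕜} (hA : A.IsHermitian) :
    ∃ U ∈ unitaryGroup ι 𝕜, ∃ E : ι → ℝ, A = U * diagonal (fun i => (E i : 𝕜)) * star U := by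
  refine ⟨_, hA.eigenvectorUnitary.2, hA.eigenvalues, ?_⟩
  conv_lhs => rw [hA.spectral_theorem, Unitary.conjStarAlgAut_apply]
  rfl

lemma exp_conj_diagonal {U : Matrix ι ι 𝕜} (hU : U ∈ unitaryGroup ι 𝕜) (a : ι → ℝ) :
    NormedSpace.exp (U * diagonal (fun i => (a i : 𝕜)) * star U) =
      U * diagonal (fun i => (exp (a i) : 𝕜)) * star U := by
  have hinv : U⁻¹ = star U := inv_eq_right_inv (mem_unitaryGroup_iff.1 hU)
  rw [← hinv, exp_conj U _ (Unitary.isUnit_coe (U := ⟨U, hU⟩)), exp_diagonal, Pi.exp_def]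
  simp only [exp_eq_exp_ℝ, ← RCLike.algebraMap_eq_ofReal, NormedSpace.algebraMap_exp_comm]

lemma trace_conj_diagonal {U : Matrix ι ι 𝕜} (hU : U ∈ unitaryGroup ι 𝕜) (d : ι → 𝕜) :
    trace (U * diagonal d * star U) = ∑ i, d i := by
  rw [trace_mul_cycle, mem_unitaryGroup_iff'.1 hU, one_mul, trace_diagonal]

lemma trace_conj_diagonal_mul_conj_diagonal (U V : Matrix ι ι 𝕜) (a b : ι → ℝ) :
    trace (U * diagonal (fun i => (a i : 𝕜)) * star U *
        (V * diagonal (fun j => (b j : 𝕜)) * star V)) =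
      ((∑ i, ∑ j, ‖(star U * V) i j‖ ^ 2 * (a i * b j) : ℝ) : 𝕜) := by
  set M := star U * V
  set A := diagonal (fun i => (a i : 𝕜))
  set B := diagonal (fun j => (b j : 𝕜))
  have hcyc : trace (U * A * star U * (V * B * star V)) = trace (A * M * B * star M) := by
    simp only [M, star_mul, star_star, mul_assoc]
    rw [trace_mul_comm]
    simp only [mul_assoc]
  rw [hcyc, trace]
  push_cast
  refine sum_congr rfl fun i _ => ?_
  rw [diag_apply, mul_apply]
  refine sum_congr rfl fun j _ => ?_
  simp only [A, B, mul_diagonal, diagonal_mul, star_apply, RCLike.star_def]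
  rw [← RCLike.mul_conj]
  ring

lemma conj_diagonal_add_smul_one {U : Matrix ι ι 𝕜} (hU : U ∈ unitaryGroup ι 𝕜) (a : ι → ℝ)
    (c : ℝ) : U * diagonal (fun i => ((a i + c : ℝ) : 𝕜)) * star U =
      U * diagonal (fun i => (a i : 𝕜)) * star U + c • 1 := by
  have hsplit :
      diagonal (fun i => ((a i + c : ℝ) : 𝕜)) = diagonal (fun i => (a i : 𝕜)) + c • 1 := by
    ext i j
    rcases eq_or_ne i j with rfl | hij
    · simp [RCLike.real_smul_eq_coe_mul]
    · simp [hij]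
  rw [hsplit, mul_add, add_mul, mul_smul_comm, mul_one, smul_mul_assoc, mem_unitaryGroup_iff.1 hU]

lemma conj_diagonal_eq_conj_diagonal_add_smul_one {U V : Matrix ι ι 𝕜}
    (hU : U ∈ unitaryGroup ι 𝕜) (hV : V ∈ unitaryGroup ι 𝕜) {a b : ι → ℝ} {c : ℝ}
    (h : ∀ i j, (star U * V) i j ≠ 0 → b j = a i + c) :
    V * diagonal (fun j => (b j : 𝕜)) * star V =
      U * diagonal (fun i => (a i : 𝕜)) * star U + c • 1 := by
  set M := star U * V
  have hVM : V = U * M := by rw [← mul_assoc, mem_unitaryGroup_iff.1 hU, one_mul]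
  have hMM : M * star M = 1 := mem_unitaryGroup_iff.1 (mul_mem (Unitary.star_mem hU) hV)
  have hshift :
      M * diagonal (fun j => (b j : 𝕜)) = diagonal (fun i => ((a i + c : ℝ) : 𝕜)) * M := by
    ext i j
    rw [mul_diagonal, diagonal_mul]
    by_cases hij : M i j = 0
    · simp [hij]
    · rw [h i j hij, mul_comm]
  calc V * diagonal (fun j => (b j : 𝕜)) * star V
      = U * (M * diagonal (fun j => (b j : 𝕜))) * star M * star U := by
        rw [hVM, star_mul]; simp only [mul_assoc]
    _ = U * diagonal (fun i => ((a i + c : ℝ) : 𝕜)) * (M * star M) * star U := by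
        rw [hshift]; simp only [mul_assoc]
    _ = U * diagonal (fun i => (a i : 𝕜)) * star U + c • 1 := by
        rw [hMM, mul_one, conj_diagonal_add_smul_one hU]

lemma exp_neg_conj_diagonal {U : Matrix ι ι 𝕜} (hU : U ∈ unitaryGroup ι 𝕜) (E : ι → ℝ) :
    NormedSpace.exp (-(U * diagonal (fun i => (E i : 𝕜)) * star U)) =
      U * diagonal (fun i => (exp (-E i) : 𝕜)) * star U := by
  rw [← exp_conj_diagonal hU]
  simp [← diagonal_neg]

lemma trace_exp_neg_conj_diagonal {U : Matrix ι ι 𝕜} (hU : U ∈ unitaryGroup ι 𝕜) (E : ι → ℝ) :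
    trace (NormedSpace.exp (-(U * diagonal (fun i => (E i : 𝕜)) * star U))) =
      (partitionFunction E : 𝕜) := by
  rw [exp_neg_conj_diagonal hU, trace_conj_diagonal hU, partitionFunction]
  push_cast
  rfl

lemma trace_exp_neg_conj_diagonal_mul_sub {U : Matrix ι ι 𝕜} (hU : U ∈ unitaryGroup ι 𝕜)
    (V : Matrix ι ι 𝕜) (E F : ι → ℝ) :
    trace (NormedSpace.exp (-(U * diagonal (fun i => (E i : 𝕜)) * star U)) *
        (V * diagonal (fun j => (F j : 𝕜)) * star V - U * diagonal (fun i => (E i : 𝕜)) * star U)) =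
      ((∑ i, ∑ j, ‖(star U * V) i j‖ ^ 2 * (exp (-E i) * F j) -
        ∑ i, exp (-E i) * E i : ℝ) : 𝕜) := by
  rw [exp_neg_conj_diagonal hU, mul_sub, trace_sub, trace_conj_diagonal_mul_conj_diagonal,
    trace_conj_diagonal_mul_conj_diagonal, mem_unitaryGroup_iff'.1 hU]
  simp [one_apply, apply_ite (fun z : 𝕜 => ‖z‖)]

end Spectral

end Matrix

/-- Equality in the Gibbs–Bogoliubov inequality
`W(g) ≤ W(f) + Z⁻¹ · Re tr(exp(-f)·(g - f))` (with `Z = Re tr(exp(-f))`) holds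
iff `g - f` is a real scalar multiple of the identity matrix. -/
theorem gibbs_bogoliubov_equality_iff_constant
    {n : ℕ} (hn : 1 ≤ n)
    (f g : Matrix (Fin n) (Fin n) ℂ)
    (hf : f.IsHermitian) (hg : g.IsHermitian) :
    (genFunctional g
        = genFunctional f
          + ((Matrix.trace (NormedSpace.exp (-f))).re)⁻¹
            * (Matrix.trace (NormedSpace.exp (-f) * (g - f))).re
      → ∃ c : ℝ, g - f = c • (1 : Matrix (Fin n) (Fin n) ℂ)) ∧
    (∀ c : ℝ, g = f + c • (1 : Matrix (Fin n) (Fin n) ℂ)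
      → genFunctional g
          = genFunctional f
            + ((Matrix.trace (NormedSpace.exp (-f))).re)⁻¹
              * (Matrix.trace (NormedSpace.exp (-f) * (g - f))).re) := by
  have : Nonempty (Fin n) := ⟨⟨0, hn⟩⟩
  obtain ⟨U, hU, E, rfl⟩ := hf.exists_unitary_eq_conj_diagonal
  rw [genFunctional, genFunctional, trace_exp_neg_conj_diagonal hU]
  constructor
  · obtain ⟨V, hV, F, rfl⟩ := hg.exists_unitary_eq_conj_diagonal
    rw [trace_exp_neg_conj_diagonal hV, trace_exp_neg_conj_diagonal_mul_sub hU]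
    intro heq
    simp only [RCLike.ofReal_eq_complex_ofReal, Complex.ofReal_re] at heq
    have hP := norm_sq_entries_mem_doublyStochastic (mul_mem (Unitary.star_mem hU) hV)
    refine ⟨log (partitionFunction E) - log (partitionFunction F), ?_⟩
    rw [conj_diagonal_eq_conj_diagonal_add_smul_one hU hV fun i j hij => ?_, add_sub_cancel_left]
    have hlevel :=
      add_log_partitionFunction_eq_of_gibbsBogoliubov_eq E hP F heq (by simpa using hij)
    linarith
  · rintro c rfl
    rw [add_sub_cancel_left, ← conj_diagonal_add_smul_one hU, trace_exp_neg_conj_diagonal hU,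
      partitionFunction_add_const, Matrix.mul_smul, mul_one, trace_smul,
      trace_exp_neg_conj_diagonal hU]
    simp only [RCLike.ofReal_eq_complex_ofReal, Complex.ofReal_re, Complex.smul_re, smul_eq_mul]
    rw [log_mul (exp_pos _).ne' (partitionFunction_pos E).ne', log_exp,
      mul_comm c, inv_mul_cancel_left₀ (partitionFunction_pos E).ne']
    ring
end

section
/- Let n ≥ 1, let f be a Hermitian complex n×n matrix, let g be an arbitrary nonzero complex n×n matrix, and let g* denote its conjugate transpose. Then ∫₀¹ Re trace(exp(−f)·g*·exp(−s·f)·g·exp(s·f)) ds > 0. In particular, the Kubo inner product ⟨g*;g⟩_f = Z⁻¹ ∫₀¹ trace(exp(−f)·g*·exp(−s·f)·g·exp(s·f)) ds with Z = Re trace(exp(−f)) is strictly positive for g ≠ 0. -/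
/-!
With `a = exp (((s - 1) / 2) • f)` and `b = exp ((-s / 2) • f)`, both Hermitian since `f` is,
cyclicity of the trace turns the integrand at `s` into `Re tr ((b g a)ᴴ (b g a))`, the squared
Frobenius norm of `b g a`. It is positive because `a` and `b` are invertible and `g ≠ 0`, so the
continuous integrand is positive on `[0, 1]`. Likewise `tr (exp (-f)) = tr (cᴴ c)` with
`c = exp (-f / 2)` invertible, so the normalisation `Z` is positive.
-/

open Matrix NormedSpace

namespace Matrix

variable {m n 𝕜 : Type*} [Fintype m] [Fintype n] [RCLike 𝕜]

open scoped ComplexOrder in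
theorem re_trace_conjTranspose_mul_self_pos {A : Matrix m n 𝕜} (hA : A ≠ 0) :
    0 < RCLike.re (Aᴴ * A).trace := by
  have hpos : 0 < (Aᴴ * A).trace :=
    (posSemidef_conjTranspose_mul_self A).trace_nonneg.lt_of_ne'
      (mt trace_conjTranspose_mul_self_eq_zero_iff.mp hA)
  exact (RCLike.pos_iff.mp hpos).1

theorem trace_conjTranspose_mul_self_mul_conjTranspose_mul_self_mul (a b g : Matrix m m 𝕜) :
    trace (aᴴ * a * gᴴ * (bᴴ * b) * g) = trace ((b * g * aᴴ)ᴴ * (b * g * aᴴ)) := by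
  simp only [conjTranspose_mul, conjTranspose_conjTranspose, Matrix.mul_assoc]
  rw [trace_mul_comm]
  simp only [Matrix.mul_assoc]

variable [DecidableEq m]

theorem exp_smul_mul_exp_smul (A : Matrix m m 𝕜) (s t : ℝ) :
    exp (s • A) * exp (t • A) = exp ((s + t) • A) := by
  rw [add_smul, exp_add_of_commute _ _ (((Commute.refl A).smul_left s).smul_right t)]

theorem continuous_exp_smul (A : Matrix m m 𝕜) : Continuous fun t : ℝ => exp (t • A) := by
  open scoped Norms.Operator in
  exact exp_continuous.comp (continuous_id.smul continuous_const)

namespace IsHermitian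

variable {f : Matrix m m 𝕜}

theorem exp_smul_eq_conjTranspose_mul_self (hf : f.IsHermitian) (t : ℝ) :
    NormedSpace.exp (t • f) =
      (NormedSpace.exp ((t / 2) • f))ᴴ * NormedSpace.exp ((t / 2) • f) := by
  rw [((hf.smul (IsSelfAdjoint.all (t / 2))).exp).eq, exp_smul_mul_exp_smul, add_halves]

theorem re_trace_exp_pos [Nonempty m] (hf : f.IsHermitian) :
    0 < RCLike.re (trace (NormedSpace.exp f)) := by
  rw [← one_smul ℝ f, hf.exp_smul_eq_conjTranspose_mul_self]
  exact re_trace_conjTranspose_mul_self_pos (isUnit_exp _).ne_zero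

theorem re_trace_exp_mul_conjTranspose_mul_exp_mul_mul_exp_pos (hf : f.IsHermitian)
    {g : Matrix m m 𝕜} (hg : g ≠ 0) (s : ℝ) :
    0 < RCLike.re (trace (NormedSpace.exp (-f) * gᴴ * NormedSpace.exp ((-s) • f) * g *
      NormedSpace.exp (s • f))) := by
  set a := NormedSpace.exp (((s + -1) / 2) • f)
  set b := NormedSpace.exp ((-s / 2) • f)
  have hsplit : trace (NormedSpace.exp (-f) * gᴴ * NormedSpace.exp ((-s) • f) * g *
      NormedSpace.exp (s • f)) = trace (aᴴ * a * gᴴ * (bᴴ * b) * g) := by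
    rw [← hf.exp_smul_eq_conjTranspose_mul_self (s + -1), ← hf.exp_smul_eq_conjTranspose_mul_self,
      trace_mul_comm, ← neg_one_smul ℝ f]
    simp only [← Matrix.mul_assoc, exp_smul_mul_exp_smul]
  rw [hsplit, trace_conjTranspose_mul_self_mul_conjTranspose_mul_self_mul]
  refine re_trace_conjTranspose_mul_self_pos fun h => hg ?_
  rwa [← star_eq_conjTranspose, (isUnit_exp _).star.mul_left_eq_zero,
    (isUnit_exp _).mul_right_eq_zero] at h

end IsHermitian

end Matrix

theorem kubo_inner_product_positive_definite_general
    {n : ℕ}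
    (f g : Matrix (Fin n) (Fin n) ℂ)
    (hf : f.IsHermitian) (hg : g ≠ 0) :
    (0 < ∫ s in (0:ℝ)..1,
        (Matrix.trace (NormedSpace.exp (-f) * gᴴ * NormedSpace.exp ((-s) • f) * g
          * NormedSpace.exp (s • f))).re) ∧
      0 < ((Matrix.trace (NormedSpace.exp (-f))).re)⁻¹
          * ∫ s in (0:ℝ)..1,
              (Matrix.trace (NormedSpace.exp (-f) * gᴴ * NormedSpace.exp ((-s) • f) * g
                * NormedSpace.exp (s • f))).re := by
  have hcont : Continuous fun s : ℝ =>
      (trace (exp (-f) * gᴴ * exp ((-s) • f) * g * exp (s • f))).re := by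
    have hexp := continuous_exp_smul f
    have hexp_neg := hexp.comp continuous_neg
    exact Complex.continuous_re.comp (Continuous.matrix_trace (by fun_prop))
  have hint : 0 < ∫ s in (0:ℝ)..1,
      (trace (exp (-f) * gᴴ * exp ((-s) • f) * g * exp (s • f))).re :=
    intervalIntegral.intervalIntegral_pos_of_pos (hcont.intervalIntegrable 0 1)
      (hf.re_trace_exp_mul_conjTranspose_mul_exp_mul_mul_exp_pos hg) one_pos
  have : Nonempty (Fin n) := not_isEmpty_iff.mp fun _ => hg (Subsingleton.elim _ _)
  exact ⟨hint, mul_pos (inv_pos.mpr hf.neg.re_trace_exp_pos) hint⟩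

/-- Positive definiteness of the Kubo inner product: for Hermitian `f` and any
nonzero matrix `g`, `∫₀¹ Re tr(exp(-f)·g*·exp(-s·f)·g·exp(s·f)) ds > 0`; in particular the
Kubo inner product `⟨g*;g⟩_f`, obtained by dividing by `Z = Re tr(exp(-f))`, is positive. -/
theorem kubo_inner_product_positive_definite
    {n : ℕ} (hn : 1 ≤ n)
    (f g : Matrix (Fin n) (Fin n) ℂ)
    (hf : f.IsHermitian) (hg : g ≠ 0) :
    (0 < ∫ s in (0:ℝ)..1,
        (Matrix.trace (NormedSpace.exp (-f) * gᴴ * NormedSpace.exp ((-s) • f) * g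
          * NormedSpace.exp (s • f))).re) ∧
      0 < ((Matrix.trace (NormedSpace.exp (-f))).re)⁻¹
          * ∫ s in (0:ℝ)..1,
              (Matrix.trace (NormedSpace.exp (-f) * gᴴ * NormedSpace.exp ((-s) • f) * g
                * NormedSpace.exp (s • f))).re :=
  kubo_inner_product_positive_definite_general f g hf hg
end

section
/- Let n ≥ 1, let f be a Hermitian complex n×n matrix, and let g be a Hermitian complex n×n matrix. Then the Kubo–Cauchy–Schwarz bound holds: (Re trace(exp(−f)·g)/Z)² ≤ Z⁻¹ ∫₀¹ Re trace(exp(−f)·g·exp(−s·f)·g·exp(s·f)) ds, where Z = Re trace(exp(−f)). Equivalently, ⟨g⟩_f² ≤ ⟨g;g⟩_f. -/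
open Matrix MeasureTheory

theorem exp_smul_eq_aux {n : ℕ} (f : Matrix (Fin n) (Fin n) ℂ) (hf : f.IsHermitian) (t : ℝ) :
    NormedSpace.exp (t • f) =
      (Matrix.IsHermitian.eigenvectorUnitary hf : Matrix (Fin n) (Fin n) ℂ)
        * diagonal (fun i => (Real.exp (t * hf.eigenvalues i) : ℂ))
        * star (Matrix.IsHermitian.eigenvectorUnitary hf : Matrix (Fin n) (Fin n) ℂ) := by
  set U : Matrix (Fin n) (Fin n) ℂ := (Matrix.IsHermitian.eigenvectorUnitary hf : Matrix (Fin n) (Fin n) ℂ)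
  have hU1 : star U * U = 1 := Unitary.coe_star_mul_self hf.eigenvectorUnitary
  have hUinv : U⁻¹ = star U := Matrix.inv_eq_left_inv hU1
  have hU2 : U * star U = 1 := Unitary.coe_mul_star_self (Matrix.IsHermitian.eigenvectorUnitary hf)
  have hUunit : IsUnit U := ⟨⟨U, star U, hU2, hU1⟩, rfl⟩
  have h1 : t • f = U * diagonal (fun i => ((t * hf.eigenvalues i : ℝ) : ℂ)) * U⁻¹ := by
    rw [hUinv]
    conv_lhs => rw [hf.spectral_theorem, Unitary.conjStarAlgAut_apply]
    rw [← smul_mul_assoc, ← mul_smul_comm]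
    congr 2
    ext i j
    rcases eq_or_ne i j with rfl | h
    · simp [Matrix.diagonal_apply_eq, Complex.real_smul]
    · simp [Matrix.diagonal_apply_ne _ h]
  rw [h1, Matrix.exp_conj U _ hUunit, Matrix.exp_diagonal, hUinv, Pi.exp_def]
  simp only [← Complex.exp_eq_exp_ℂ, ← Complex.ofReal_exp]


/-- The Kubo–Cauchy–Schwarz bound `⟨g⟩_f² ≤ ⟨g;g⟩_f` for Hermitian `f` and
Hermitian `g`: `(Re tr(exp(-f)·g)/Z)² ≤ Z⁻¹ ∫₀¹ Re tr(exp(-f)·g·exp(-s·f)·g·exp(s·f)) ds`,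
where `Z = Re tr(exp(-f))`. -/
theorem kubo_cauchy_schwarz_value_sq_le
    {n : ℕ} (hn : 1 ≤ n)
    (f g : Matrix (Fin n) (Fin n) ℂ)
    (hf : f.IsHermitian) (hg : g.IsHermitian) :
    ((Matrix.trace (NormedSpace.exp (-f) * g)).re
        / (Matrix.trace (NormedSpace.exp (-f))).re) ^ 2
      ≤ ((Matrix.trace (NormedSpace.exp (-f))).re)⁻¹
          * ∫ s in (0:ℝ)..1,
              (Matrix.trace (NormedSpace.exp (-f) * g * NormedSpace.exp ((-s) • f) * g
                * NormedSpace.exp (s • f))).re := by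
  have hne : Nonempty (Fin n) := ⟨⟨0, hn⟩⟩
  set U : Matrix (Fin n) (Fin n) ℂ := (Matrix.IsHermitian.eigenvectorUnitary hf : Matrix (Fin n) (Fin n) ℂ) with hUdef
  set lam : Fin n → ℝ := hf.eigenvalues with hlam
  have hU1 : star U * U = 1 := Unitary.coe_star_mul_self hf.eigenvectorUnitary
  have hU2 : U * star U = 1 := Unitary.coe_mul_star_self (Matrix.IsHermitian.eigenvectorUnitary hf)
  set D : ℝ → Matrix (Fin n) (Fin n) ℂ := fun t => diagonal (fun i => (Real.exp (t * lam i) : ℂ)) with hD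
  have hE : ∀ t : ℝ, NormedSpace.exp (t • f) = U * D t * star U := fun t => exp_smul_eq_aux f hf t
  have hEneg : NormedSpace.exp (-f) = U * D (-1) * star U := by
    rw [← neg_one_smul ℝ f, hE]
  set g' : Matrix (Fin n) (Fin n) ℂ := star U * g * U with hg'def
  have hg' : g'.IsHermitian := by
    have := Matrix.isHermitian_conjTranspose_mul_mul U hg
    simpa [hg'def, Matrix.star_eq_conjTranspose] using this
  -- cyclic trace helper
  have key : ∀ X : Matrix (Fin n) (Fin n) ℂ, Matrix.trace (U * X * star U) = Matrix.trace X := by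
    intro X
    rw [Matrix.trace_mul_cycle, hU1, one_mul]
  -- value of Z
  have hZ : (Matrix.trace (NormedSpace.exp (-f))).re = ∑ i, Real.exp (-lam i) := by
    rw [hEneg, key, Matrix.trace_diagonal, ← Complex.ofReal_sum]
    simp [neg_one_mul, ← Complex.ofReal_neg, Complex.exp_ofReal_re]
  -- numerator
  have hS : (Matrix.trace (NormedSpace.exp (-f) * g)).re
      = ∑ i, Real.exp (-lam i) * (g' i i).re := by
    have h1 : NormedSpace.exp (-f) * g = U * D (-1) * (star U * g) := by
      rw [hEneg, Matrix.mul_assoc]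
    rw [h1, Matrix.trace_mul_cycle]
    show (g' * D (-1)).trace.re = _
    have h3 : Matrix.trace (g' * D (-1)) = ∑ i, g' i i * (Real.exp (-1 * lam i) : ℂ) := by
      simp [Matrix.trace, Matrix.diag, hD, Matrix.mul_diagonal]
    rw [h3, Complex.re_sum]
    refine Finset.sum_congr rfl fun i _ => ?_
    rw [mul_comm, Complex.re_ofReal_mul, neg_one_mul]
  -- big trace
  have hbig : ∀ s : ℝ, (Matrix.trace (NormedSpace.exp (-f) * g * NormedSpace.exp ((-s) • f) * g
        * NormedSpace.exp (s • f))).re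
      = ∑ i, ∑ j, Real.exp (-lam i) * Real.exp (s * (lam i - lam j)) * Complex.normSq (g' i j) := by
    intro s
    have h1 : NormedSpace.exp (-f) * g * NormedSpace.exp ((-s) • f) * g * NormedSpace.exp (s • f)
        = U * (D (-1) * g' * D (-s) * g' * D s) * star U := by
      rw [hEneg, hE, hE, hg'def]
      simp only [Matrix.mul_assoc]
    rw [h1, key]
    have h2 : Matrix.trace (D (-1) * g' * D (-s) * g' * D s)
        = ∑ i, ∑ j, (Real.exp (-1 * lam i) : ℂ) * g' i j * (Real.exp ((-s) * lam j) : ℂ)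
            * g' j i * (Real.exp (s * lam i) : ℂ) := by
      simp only [hD, Matrix.trace, Matrix.diag_apply, Matrix.mul_apply, Matrix.diagonal_apply,
        ite_mul, mul_ite, zero_mul, mul_zero, Finset.sum_ite_eq, Finset.sum_ite_eq',
        Finset.mem_univ, if_true, Finset.sum_mul, Finset.mul_sum]
    rw [h2, Complex.re_sum]
    refine Finset.sum_congr rfl fun i _ => ?_
    rw [Complex.re_sum]
    refine Finset.sum_congr rfl fun j _ => ?_
    have hstar : g' j i = (starRingEnd ℂ) (g' i j) := (hg'.apply j i).symm
    rw [hstar]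
    rw [show ((Real.exp (-1 * lam i) : ℝ) : ℂ) * g' i j * ((Real.exp ((-s) * lam j) : ℝ) : ℂ)
          * (starRingEnd ℂ) (g' i j) * ((Real.exp (s * lam i) : ℝ) : ℂ)
        = (((Real.exp (-1 * lam i) * Real.exp ((-s) * lam j) * Real.exp (s * lam i) : ℝ)) : ℂ)
            * (g' i j * (starRingEnd ℂ) (g' i j)) from by push_cast; ring,
      Complex.mul_conj]
    rw [← Complex.ofReal_mul, Complex.ofReal_re]
    rw [neg_one_mul, mul_assoc (Real.exp (-lam i)) (Real.exp ((-s) * lam j)) (Real.exp (s * lam i)),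
      ← Real.exp_add, show (-s) * lam j + s * lam i = s * (lam i - lam j) from by ring]

  set p : Fin n → ℝ := fun i => Real.exp (-lam i) with hp
  set a : Fin n → ℝ := fun i => (g' i i).re with ha
  have hZpos : 0 < ∑ i, p i :=
    Finset.sum_pos (fun i _ => Real.exp_pos _) Finset.univ_nonempty
  -- the integral
  set I : Fin n × Fin n → ℝ := fun q =>
    ∫ s in (0:ℝ)..1, p q.1 * Real.exp (s * (lam q.1 - lam q.2)) * Complex.normSq (g' q.1 q.2)
    with hI
  have hconts : ∀ q : Fin n × Fin n, Continuous fun s : ℝ =>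
      p q.1 * Real.exp (s * (lam q.1 - lam q.2)) * Complex.normSq (g' q.1 q.2) := by
    intro q; fun_prop
  have hIeq : (∫ s in (0:ℝ)..1,
        (Matrix.trace (NormedSpace.exp (-f) * g * NormedSpace.exp ((-s) • f) * g
          * NormedSpace.exp (s • f))).re)
      = ∑ q : Fin n × Fin n, I q := by
    calc (∫ s in (0:ℝ)..1,
        (Matrix.trace (NormedSpace.exp (-f) * g * NormedSpace.exp ((-s) • f) * g
          * NormedSpace.exp (s • f))).re)
        = ∫ s in (0:ℝ)..1, ∑ q : Fin n × Fin n,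
            p q.1 * Real.exp (s * (lam q.1 - lam q.2)) * Complex.normSq (g' q.1 q.2) := by
          refine intervalIntegral.integral_congr fun s _ => ?_
          rw [hbig s, Fintype.sum_prod_type]
      _ = ∑ q : Fin n × Fin n, I q :=
          intervalIntegral.integral_finset_sum fun q _ => (hconts q).intervalIntegrable _ _
  have hIdiag : ∀ i : Fin n, I (i, i) = p i * a i ^ 2 := by
    intro i
    have him : (g' i i).im = 0 := Complex.conj_eq_iff_im.mp (hg'.apply i i)
    have hns : Complex.normSq (g' i i) = a i ^ 2 := by
      rw [Complex.normSq_apply, him]; ring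
    rw [hI]
    simp only [sub_self, mul_zero, Real.exp_zero, mul_one, hns]
    rw [intervalIntegral.integral_const]
    simp
  have hInonneg : ∀ q : Fin n × Fin n, 0 ≤ I q := by
    intro q
    refine intervalIntegral.integral_nonneg (by norm_num) fun s _ => ?_
    have h1 : 0 ≤ p q.1 := (Real.exp_pos _).le
    have h2 : 0 ≤ Real.exp (s * (lam q.1 - lam q.2)) := (Real.exp_pos _).le
    have h3 : 0 ≤ Complex.normSq (g' q.1 q.2) := Complex.normSq_nonneg _
    positivity
  have hdiag_le : ∑ i, p i * a i ^ 2 ≤ ∑ q : Fin n × Fin n, I q := by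
    calc ∑ i, p i * a i ^ 2 = ∑ i, I (i, i) := by
          exact Finset.sum_congr rfl fun i _ => (hIdiag i).symm
      _ ≤ ∑ i, ∑ j, I (i, j) :=
          Finset.sum_le_sum fun i _ =>
            Finset.single_le_sum (fun j _ => hInonneg (i, j)) (Finset.mem_univ i)
      _ = ∑ q : Fin n × Fin n, I q := (Fintype.sum_prod_type _).symm
  have hCS : (∑ i, p i * a i) ^ 2 ≤ (∑ i, p i) * ∑ i, p i * a i ^ 2 :=
    Finset.sum_sq_le_sum_mul_sum_of_sq_eq_mul Finset.univ
      (fun i _ => (Real.exp_pos _).le)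
      (fun i _ => mul_nonneg (Real.exp_pos _).le (sq_nonneg _))
      (fun i _ => by ring)
  rw [hZ, hS, hIeq, div_pow]
  calc (∑ i, p i * a i) ^ 2 / (∑ i, p i) ^ 2
      ≤ ((∑ i, p i) * ∑ i, p i * a i ^ 2) / (∑ i, p i) ^ 2 := by gcongr
    _ = (∑ i, p i)⁻¹ * ∑ i, p i * a i ^ 2 := by
        rw [pow_two, mul_div_mul_left _ _ hZpos.ne', div_eq_inv_mul]
    _ ≤ (∑ i, p i)⁻¹ * ∑ q : Fin n × Fin n, I q := by
        exact mul_le_mul_of_nonneg_left hdiag_le (inv_nonneg.mpr hZpos.le)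
end

section
/- Let n ≥ 1 and let f : ℝ → (complex n×n matrices) be differentiable at λ with derivative f'(λ). Then the map t ↦ exp(−f(t)) is differentiable at λ, and its derivative equals −(∫₀¹ exp(−s·f(λ))·f'(λ)·exp(s·f(λ)) ds)·exp(−f(λ)). -/
/-!
Integrating `d/ds (exp (s • X) * exp (-(s • Y))) = exp (s • X) * (X - Y) * exp (-(s • Y))`
over `[0, 1]` gives Duhamel's formula
`exp X - exp Y = (∫ s in 0..1, exp (s • X) * (X - Y) * exp (-(s • Y))) * exp Y`.
With `X = f t`, `Y = f l` and division by `t - l`, the difference quotient of `exp ∘ f` becomes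
a jointly continuous function of `(f t, slope f l t)`, whose limit is read off at `(f l, f')`.
-/

open Matrix MeasureTheory NormedSpace Filter Topology

attribute [local instance] Matrix.linftyOpNormedRing Matrix.linftyOpNormedAlgebra

section
variable {𝔸 : Type*} [NormedRing 𝔸] [NormedAlgebra ℝ 𝔸] [CompleteSpace 𝔸]

@[fun_prop]
theorem continuous_exp_of_normedAlgebra_real : Continuous (exp : 𝔸 → 𝔸) :=
  letI : NormedAlgebra ℚ 𝔸 := .restrictScalars ℚ ℝ 𝔸
  exp_continuous

theorem hasDerivAt_exp_smul_mul_exp_neg_smul (X Y : 𝔸) (s : ℝ) :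
    HasDerivAt (fun u : ℝ => exp (u • X) * exp (-(u • Y)))
      (exp (s • X) * (X - Y) * exp (-(s • Y))) s := by
  have hY : HasDerivAt (fun u : ℝ => exp (-(u • Y))) (-Y * exp (-(s • Y))) s := by
    simpa only [smul_neg] using hasDerivAt_exp_smul_const' (-Y) s
  refine ((hasDerivAt_exp_smul_const X s).mul hY).congr_deriv ?_
  noncomm_ring

theorem exp_sub_exp_eq_integral_mul_exp (X Y : 𝔸) :
    exp X - exp Y = (∫ s in (0:ℝ)..1, exp (s • X) * (X - Y) * exp (-(s • Y))) * exp Y := by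
  let : NormedAlgebra ℚ 𝔸 := .restrictScalars ℚ ℝ 𝔸
  rw [intervalIntegral.integral_eq_sub_of_hasDerivAt
    (fun s _ => hasDerivAt_exp_smul_mul_exp_neg_smul X Y s)
    (Continuous.intervalIntegrable (by fun_prop) 0 1)]
  simp only [one_smul, zero_smul, neg_zero, exp_zero, mul_one, sub_mul, mul_assoc, one_mul]
  rw [← exp_add_of_commute (Commute.refl Y).neg_left, neg_add_cancel, exp_zero, mul_one]

theorem continuous_integral_exp_smul_mul_mul_exp_neg_smul (Y : 𝔸) :
    Continuous fun p : 𝔸 × 𝔸 => ∫ s in (0:ℝ)..1, exp (s • p.1) * p.2 * exp (-(s • Y)) :=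
  intervalIntegral.continuous_parametric_intervalIntegral_of_continuous' (by fun_prop) 0 1

theorem HasDerivAt.normedSpace_exp {f : ℝ → 𝔸} {f' : 𝔸} {l : ℝ} (hf : HasDerivAt f f' l) :
    HasDerivAt (fun t => NormedSpace.exp (f t))
      ((∫ s in (0:ℝ)..1, NormedSpace.exp (s • f l) * f' * NormedSpace.exp (-(s • f l))) *
        NormedSpace.exp (f l)) l := by
  have hf_cont := hf.continuousAt
  rw [hasDerivAt_iff_tendsto_slope] at hf ⊢
  have hslope : ∀ t, slope (fun t => NormedSpace.exp (f t)) l t =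
      (∫ s in (0:ℝ)..1, NormedSpace.exp (s • f t) * slope f l t * NormedSpace.exp (-(s • f l))) *
        NormedSpace.exp (f l) := by
    intro t
    rw [slope_def_module, slope_def_module, exp_sub_exp_eq_integral_mul_exp, ← smul_mul_assoc,
      ← intervalIntegral.integral_smul]
    simp only [mul_smul_comm, smul_mul_assoc]
  refine Tendsto.congr (fun t => (hslope t).symm) ?_
  have hpair : Tendsto (fun t => (f t, slope f l t)) (𝓝[≠] l) (𝓝 (f l, f')) :=
    (hf_cont.tendsto.mono_left nhdsWithin_le_nhds).prodMk_nhds hf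
  have hintegral := ((continuous_integral_exp_smul_mul_mul_exp_neg_smul (f l)).tendsto _).comp hpair
  exact hintegral.mul_const _
end

theorem quantum_chain_rule_exp_neg_general
    {n : ℕ}
    (f : ℝ → Matrix (Fin n) (Fin n) ℂ)
    (f' : Matrix (Fin n) (Fin n) ℂ) (l : ℝ)
    (hf : HasDerivAt f f' l) :
    HasDerivAt (fun t => NormedSpace.exp (-f t))
      (-((∫ s in (0:ℝ)..1,
            NormedSpace.exp ((-s) • f l) * f' * NormedSpace.exp (s • f l))
          * NormedSpace.exp (-f l))) l := by
  refine hf.neg.normedSpace_exp.congr_deriv ?_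
  simp only [Pi.neg_apply, smul_neg, neg_smul, neg_neg, mul_neg, neg_mul,
    intervalIntegral.integral_neg]
  -- the statement's `exp`, `•` and `∫` use the `Matrix` instances (and `NormedSpace.complexToReal`),
  -- which agree definitionally with those derived from `Matrix.linftyOpNormedAlgebra`
  rfl

/-- The quantum chain rule: if `f : ℝ → ℂ^{n×n}` is differentiable at `λ` with
derivative `f'`, then `t ↦ exp(-f(t))` is differentiable at `λ` with derivative
`-(∫₀¹ exp(-s·f(λ))·f'·exp(s·f(λ)) ds)·exp(-f(λ))`. -/
theorem quantum_chain_rule_exp_neg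
    {n : ℕ} (hn : 1 ≤ n)
    (f : ℝ → Matrix (Fin n) (Fin n) ℂ)
    (f' : Matrix (Fin n) (Fin n) ℂ) (l : ℝ)
    (hf : HasDerivAt f f' l) :
    HasDerivAt (fun t => NormedSpace.exp (-f t))
      (-((∫ s in (0:ℝ)..1,
            NormedSpace.exp ((-s) • f l) * f' * NormedSpace.exp (s • f l))
          * NormedSpace.exp (-f l))) l :=
  quantum_chain_rule_exp_neg_general f f' l hf
end

section
/- Let n ≥ 1 and let f : ℝ → (complex n×n matrices) be differentiable at λ with derivative f'(λ). Then the scalar function t ↦ trace(exp(f(t))) is differentiable at λ with derivative trace(exp(f(λ))·f'(λ)). -/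
/-!
Expand `exp X = ∑ Xᵏ / k!` and differentiate termwise. For a continuous linear `τ` with
`τ (a * b) = τ (b * a)`, the derivative of `X ↦ τ (Xᵏ)` in direction `H` is
`∑ᵢ τ (Xⁱ H Xᵏ⁻¹⁻ⁱ) = k τ (Xᵏ⁻¹ H)` by cyclicity, so the differentiated series sums to
`τ (exp X * H)`. On the ball of radius `R` these derivatives are bounded by `‖τ‖ Rᵏ⁻¹ / (k-1)!`,
which justifies termwise differentiation; the theorem is the case `τ = trace`.
-/

open Matrix

attribute [local instance] Matrix.linftyOpNormedRing Matrix.linftyOpNormedAlgebra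

open ContinuousLinearMap NormedSpace Metric
open scoped Nat

section

variable {𝕂 𝔸 F : Type*} [NontriviallyNormedField 𝕂] [NormedRing 𝔸] [NormedAlgebra 𝕂 𝔸]
  [NormedAddCommGroup F] [NormedSpace 𝕂 F] (τ : 𝔸 →L[𝕂] F)

theorem hasFDerivAt_tracial_pow (hτ : ∀ a b, τ (a * b) = τ (b * a)) (k : ℕ) (A : 𝔸) :
    HasFDerivAt (fun X => τ (X ^ k)) (k • τ.comp (mul 𝕂 𝔸 (A ^ (k - 1)))) A := by
  refine (τ.hasFDerivAt.comp A (hasFDerivAt_pow' k)).congr_fderiv (ext fun H => ?_)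
  have cycle : ∀ i ∈ Finset.range k, τ (A ^ (k - 1 - i) * H * A ^ i) = τ (A ^ (k - 1) * H) := by
    intro i hi
    rw [hτ, ← mul_assoc, ← pow_add, Nat.add_sub_cancel' (by grind)]
  simp [Finset.sum_congr rfl cycle]

theorem norm_comp_mul_pow_le (X : 𝔸) (k : ℕ) :
    ‖τ.comp (mul 𝕂 𝔸 (X ^ k))‖ ≤ ‖τ‖ * ‖X‖ ^ k := by
  rcases Nat.eq_zero_or_pos k with rfl | hk
  · have mul_one_eq_id : mul 𝕂 𝔸 1 = .id 𝕂 𝔸 := ext one_mul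
    simp [mul_one_eq_id]
  · calc ‖τ.comp (mul 𝕂 𝔸 (X ^ k))‖ ≤ ‖τ‖ * ‖X ^ k‖ :=
          (opNorm_comp_le _ _).trans (by gcongr; exact opNorm_mul_apply_le _ _ _)
      _ ≤ ‖τ‖ * ‖X‖ ^ k := by gcongr; exact norm_pow_le' X hk

end

theorem hasFDerivAt_tracial_exp {𝕂 𝔸 F : Type*} [RCLike 𝕂] [NormedRing 𝔸] [NormedAlgebra 𝕂 𝔸]
    [CompleteSpace 𝔸] [NormedAddCommGroup F] [NormedSpace 𝕂 F] [CompleteSpace F]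
    (τ : 𝔸 →L[𝕂] F) (hτ : ∀ a b, τ (a * b) = τ (b * a)) (A : 𝔸) :
    HasFDerivAt (fun X => τ (exp X)) (τ.comp (mul 𝕂 𝔸 (exp A))) A := by
  set R := ‖A‖ + 1
  let u : ℕ → ℝ := fun k => ‖τ‖ * (R ^ (k - 1) / (k - 1)!)
  have hu : Summable u :=
    (summable_nat_add_iff 1).mp ((Real.summable_pow_div_factorial R).mul_left ‖τ‖)
  let f' : ℕ → 𝔸 → 𝔸 →L[𝕂] F := fun k X => (k !⁻¹ : 𝕂) • k • τ.comp (mul 𝕂 𝔸 (X ^ (k - 1)))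
  have f'_succ : ∀ k X, f' (k + 1) X = (k !⁻¹ : 𝕂) • τ.comp (mul 𝕂 𝔸 (X ^ k)) := by
    intro k X
    have coeff : ((k + 1)! ⁻¹ : 𝕂) * (k + 1 : ℕ) = (k !⁻¹ : 𝕂) := by
      rw [Nat.factorial_succ]; push_cast; field_simp
    simp only [f', ← Nat.cast_smul_eq_nsmul 𝕂, smul_smul, coeff, Nat.add_sub_cancel]
  have bound : ∀ k, ∀ X ∈ ball (0 : 𝔸) R, ‖f' k X‖ ≤ u k := by
    rintro (_ | k) X hX
    · simp [f', u]
    · have hXR : ‖X‖ ≤ R := (mem_ball_zero_iff.1 hX).le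
      calc ‖f' (k + 1) X‖ = (k ! : ℝ)⁻¹ * ‖τ.comp (mul 𝕂 𝔸 (X ^ k))‖ := by
            rw [f'_succ, norm_smul, norm_inv, RCLike.norm_natCast]
        _ ≤ (k ! : ℝ)⁻¹ * (‖τ‖ * R ^ k) := by
            gcongr; exact (norm_comp_mul_pow_le τ X k).trans (by gcongr)
        _ = u (k + 1) := by simp only [u, Nat.add_sub_cancel]; ring
  have hasSum_trace_exp : ∀ X : 𝔸, HasSum (fun k => (k !⁻¹ : 𝕂) • τ (X ^ k)) (τ (exp X)) := by
    intro X
    simpa using (exp_series_hasSum_exp' (𝕂 := 𝕂) X).mapL τ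
  have hasSum_deriv : HasSum (fun k => f' k A) (τ.comp (mul 𝕂 𝔸 (exp A))) := by
    have h := (exp_series_hasSum_exp' (𝕂 := 𝕂) A).mapL ((compL 𝕂 𝔸 𝔸 F τ).comp (mul 𝕂 𝔸))
    rw [← hasSum_nat_add_iff' 1]
    simpa [f'_succ, f'] using h
  let : NormedSpace ℝ 𝔸 := .restrictScalars ℝ 𝕂 𝔸
  have key := hasFDerivAt_tsum_of_isPreconnected hu isOpen_ball (convex_ball _ _).isPreconnected
    (fun k X _ => (hasFDerivAt_tracial_pow τ hτ k X).const_smul (k !⁻¹ : 𝕂)) bound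
    (mem_ball_zero_iff.2 (lt_add_one _)) (hasSum_trace_exp A).summable
    (mem_ball_zero_iff.2 (lt_add_one _))
  rw [hasSum_deriv.tsum_eq] at key
  rwa [show (fun X => τ (exp X)) = fun X => ∑' k, (k !⁻¹ : 𝕂) • τ (X ^ k) from
    funext fun X => (hasSum_trace_exp X).tsum_eq.symm]

theorem hasDerivAt_trace_exp_general
    {n : ℕ}
    (f : ℝ → Matrix (Fin n) (Fin n) ℂ)
    (f' : Matrix (Fin n) (Fin n) ℂ) (l : ℝ)
    (hf : HasDerivAt f f' l) :
    HasDerivAt (fun t => Matrix.trace (NormedSpace.exp (f t)))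
      (Matrix.trace (NormedSpace.exp (f l) * f')) l := by
  have key := hasFDerivAt_tracial_exp (traceLinearMap (Fin n) ℂ ℂ).toContinuousLinearMap
    trace_mul_comm (f l)
  exact (key.restrictScalars ℝ).comp_hasDerivAt l hf

/-- If `f : ℝ → ℂ^{n×n}` is differentiable at `λ` with derivative `f'`, then
`t ↦ tr(exp(f(t)))` is differentiable at `λ` with derivative `tr(exp(f(λ))·f')`. -/
theorem hasDerivAt_trace_exp
    {n : ℕ} (hn : 1 ≤ n)
    (f : ℝ → Matrix (Fin n) (Fin n) ℂ)
    (f' : Matrix (Fin n) (Fin n) ℂ) (l : ℝ)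
    (hf : HasDerivAt f f' l) :
    HasDerivAt (fun t => Matrix.trace (NormedSpace.exp (f t)))
      (Matrix.trace (NormedSpace.exp (f l) * f')) l :=
  hasDerivAt_trace_exp_general f f' l hf
end
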